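/- Let Θ be an open saturated branch of the extended tableau calculus with reachability rules, closed under (+intro): i:⟨a⟩j ∈ Θ implies i:⟨+⟩j ∈ Θ, and (trans): i:⟨+⟩j ∈ Θ and j:⟨+⟩k ∈ Θ imply i:⟨+⟩k ∈ Θ, with the clash condition that i:⟨+⟩i ∉ Θ for all i. Then the relation F = (⋃_a R_a^Θ)⁺ (transitive closure of the union of the extracted accessibility relations) is irreflexive. -/
import Mathlib

theorem stmt17 {A : Type}
    (Dia : A → ℕ → ℕ → Prop) (Plus : ℕ → ℕ → Prop) (EqN : ℕ → ℕ → Prop) (u : ℕ → ℕ)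
    (hintro : ∀ (a : A) (i j : ℕ), Dia a i j → Plus i j)
    (htrans : ∀ i j k : ℕ, Plus i j → Plus j k → Plus i k)
    (hclash : ∀ i : ℕ, ¬ Plus i i)
    (hpcopy : ∀ (a : A) (i j k : ℕ), Dia a i j → EqN j k → Plus i k)
    (htransfer : ∀ i j : ℕ, Plus i j → Plus (u i) (u j)) :
    ∀ n : ℕ, ¬ Relation.TransGen
      (fun x y => ∃ (a : A) (i j : ℕ), Dia a i j ∧ u i = x ∧ u j = y) n n := by
  have base : ∀ x y, (∃ (a : A) (i j : ℕ), Dia a i j ∧ u i = x ∧ u j = y) → Plus x y := by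
    rintro x y ⟨a, i, j, hd, rfl, rfl⟩
    exact htransfer i j (hintro a i j hd)
  have key : ∀ x y, Relation.TransGen
      (fun x y => ∃ (a : A) (i j : ℕ), Dia a i j ∧ u i = x ∧ u j = y) x y → Plus x y := by
    intro x y h
    induction h with
    | single h => exact base _ _ h
    | tail _ h ih => exact htrans _ _ _ ih (base _ _ h)
  intro n h
  exact hclash n (key n n h)
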